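/- (InfoMat total-sum identity) Let (X^n, Y^n) be jointly distributed random sequences with finite alphabets. Then the mutual information equals the sum of all entries of the information matrix: I(X^n; Y^n) = Σ_{i=1}^n Σ_{j=1}^n I(X_i; Y_j | X^{i-1}, Y^{j-1}). Moreover, the upper-triangular part (entries with j ≥ i) sums to I(X^n→Y^n) and the strictly lower-triangular part (entries with j < i) sums to I(DY^n→X^n). -/

import Mathlib

open Finset

noncomputable section

-- Probability of the event `E` under the pmf `p` on a finite sample space `Ω`.
open Classical in
def pr {Ω : Type*} [Fintype Ω] (p : Ω → ℝ) (E : Ω → Prop) : ℝ :=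
  ∑ ω, if E ω then p ω else 0

-- Shannon entropy `H(U)` (pointwise form).
def entropy {Ω α : Type*} [Fintype Ω] (p : Ω → ℝ) (U : Ω → α) : ℝ :=
  -∑ ω, p ω * Real.log (pr p (fun ω' => U ω' = U ω))

-- Conditional Shannon entropy `H(U | V)`.
def condEntropy {Ω α β : Type*} [Fintype Ω] (p : Ω → ℝ) (U : Ω → α) (V : Ω → β) : ℝ :=
  -∑ ω, p ω * Real.log
      (pr p (fun ω' => U ω' = U ω ∧ V ω' = V ω) / pr p (fun ω' => V ω' = V ω))

-- Mutual information `I(U ; V)`.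
def mutualInfo {Ω α β : Type*} [Fintype Ω] (p : Ω → ℝ) (U : Ω → α) (V : Ω → β) : ℝ :=
  ∑ ω, p ω * Real.log
      (pr p (fun ω' => U ω' = U ω ∧ V ω' = V ω) /
        (pr p (fun ω' => U ω' = U ω) * pr p (fun ω' => V ω' = V ω)))

-- Conditional mutual information `I(U ; V | W)`.
def condMutualInfo {Ω α β γ : Type*} [Fintype Ω] (p : Ω → ℝ)
    (U : Ω → α) (V : Ω → β) (W : Ω → γ) : ℝ :=
  ∑ ω, p ω * Real.log
      ((pr p (fun ω' => U ω' = U ω ∧ V ω' = V ω ∧ W ω' = W ω) *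
          pr p (fun ω' => W ω' = W ω)) /
        (pr p (fun ω' => U ω' = U ω ∧ W ω' = W ω) *
          pr p (fun ω' => V ω' = V ω ∧ W ω' = W ω)))

-- The prefix `(X_0, …, X_{i-1})` of a random sequence `X`.
def prefixSeq {Ω 𝒳 : Type*} (X : Ω → ℕ → 𝒳) (i : ℕ) : Ω → (Fin i → 𝒳) :=
  fun ω j => X ω (j : ℕ)

-- Directed information `I(X^n → Y^n) = ∑_{i=1}^n I(X^i ; Y_i | Y^{i-1})` (0-indexed).
def directedInfo {Ω 𝒳 𝒴 : Type*} [Fintype Ω] (p : Ω → ℝ)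
    (X : Ω → ℕ → 𝒳) (Y : Ω → ℕ → 𝒴) (n : ℕ) : ℝ :=
  ∑ i ∈ Finset.range n,
    condMutualInfo p (prefixSeq X (i + 1)) (fun ω => Y ω i) (prefixSeq Y i)

/-!
Write `H i j` for the joint entropy `H(X^i, Y^j)`. Expanding conditional mutual information into
entropies shows that the entry `(i, j)` of the information matrix is minus the mixed second
difference `H(i+1, j+1) - H(i+1, j) - H(i, j+1) + H(i, j)`. Sums of a mixed second difference
telescope: over the whole square to `-(H(n,n) - H(n,0) - H(0,n))`, which is `I(X^n; Y^n)`
because `H(0,0) = 0`; over column `j` of the upper triangle to `I(X^{j+1}; Y_j | Y^j)`; and over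
row `i` of the strictly lower triangle to `I(Y^i; X_i | X^i)`.
-/

section Telescoping

def mixedDiff (F : ℕ → ℕ → ℝ) (i j : ℕ) : ℝ :=
  F (i + 1) (j + 1) - F (i + 1) j - F i (j + 1) + F i j

variable (F : ℕ → ℕ → ℝ)

theorem sum_range_mixedDiff_right (i m : ℕ) :
    ∑ j ∈ range m, mixedDiff F i j = F (i + 1) m - F (i + 1) 0 - F i m + F i 0 := by
  have h := sum_range_sub (fun j => F (i + 1) j - F i j) m
  exact (sum_congr rfl fun j _ => by unfold mixedDiff; ring).trans (h.trans (by ring))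

theorem sum_range_mixedDiff_left (j m : ℕ) :
    ∑ i ∈ range m, mixedDiff F i j = F m (j + 1) - F 0 (j + 1) - F m j + F 0 j := by
  have h := sum_range_sub (fun i => F i (j + 1) - F i j) m
  exact (sum_congr rfl fun i _ => by unfold mixedDiff; ring).trans (h.trans (by ring))

theorem sum_range_sum_range_mixedDiff (n m : ℕ) :
    ∑ i ∈ range n, ∑ j ∈ range m, mixedDiff F i j = F n m - F n 0 - F 0 m + F 0 0 := by
  simp only [sum_range_mixedDiff_right]
  have h := sum_range_sub (fun i => F i m - F i 0) n
  exact (sum_congr rfl fun i _ => by ring).trans (h.trans (by ring))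

end Telescoping

theorem sum_range_ite_lt {M : Type*} [AddCommMonoid M] {i n : ℕ} (h : i ≤ n) (g : ℕ → M) :
    ∑ j ∈ range n, (if j < i then g j else 0) = ∑ j ∈ range i, g j := by
  rw [← sum_filter]
  congr 1
  ext j
  simp only [mem_filter, mem_range]
  omega

section Entropy

variable {Ω : Type*} [Fintype Ω] {p : Ω → ℝ}

theorem pr_congr {E F : Ω → Prop} (h : ∀ ω, E ω ↔ F ω) : pr p E = pr p F := by
  rw [show E = F from funext fun ω => propext (h ω)]

theorem pr_pos (hp0 : ∀ ω, 0 ≤ p ω) {E : Ω → Prop} {ω : Ω} (hω : E ω) (hpω : 0 < p ω) :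
    0 < pr p E := by
  classical
  refine sum_pos' (fun ω _ => ?_) ⟨ω, mem_univ ω, by simpa [hω] using hpω⟩
  split_ifs
  exacts [hp0 ω, le_rfl]

theorem entropy_congr {α β : Type*} {U : Ω → α} {V : Ω → β}
    (h : ∀ ω' ω, U ω' = U ω ↔ V ω' = V ω) : entropy p U = entropy p V := by
  unfold entropy
  exact congrArg _ (sum_congr rfl fun ω _ => by rw [pr_congr (h · ω)])

theorem condMutualInfo_eq_entropy (hp0 : ∀ ω, 0 ≤ p ω) {α β γ : Type*}
    (U : Ω → α) (V : Ω → β) (W : Ω → γ) :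
    condMutualInfo p U V W =
      entropy p (fun ω => (U ω, W ω)) + entropy p (fun ω => (V ω, W ω))
        - entropy p (fun ω => (U ω, V ω, W ω)) - entropy p W := by
  simp only [condMutualInfo, entropy, Prod.mk.injEq]
  simp only [← sum_neg_distrib, ← sum_add_distrib, ← sum_sub_distrib]
  refine sum_congr rfl fun ω _ => ?_
  rcases (hp0 ω).eq_or_lt with hω | hω
  · simp [← hω]
  have hUVW := pr_pos hp0 (E := fun ω' => U ω' = U ω ∧ V ω' = V ω ∧ W ω' = W ω) ⟨rfl, rfl, rfl⟩ hω
  have hUW := pr_pos hp0 (E := fun ω' => U ω' = U ω ∧ W ω' = W ω) ⟨rfl, rfl⟩ hω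
  have hVW := pr_pos hp0 (E := fun ω' => V ω' = V ω ∧ W ω' = W ω) ⟨rfl, rfl⟩ hω
  have hW := pr_pos hp0 (E := fun ω' => W ω' = W ω) rfl hω
  rw [Real.log_div (by positivity) (by positivity), Real.log_mul hUVW.ne' hW.ne',
    Real.log_mul hUW.ne' hVW.ne']
  ring

theorem mutualInfo_eq_entropy (hp0 : ∀ ω, 0 ≤ p ω) {α β : Type*} (U : Ω → α) (V : Ω → β) :
    mutualInfo p U V = entropy p U + entropy p V - entropy p (fun ω => (U ω, V ω)) := by
  simp only [mutualInfo, entropy, Prod.mk.injEq]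
  simp only [← sum_neg_distrib, ← sum_add_distrib, ← sum_sub_distrib]
  refine sum_congr rfl fun ω _ => ?_
  rcases (hp0 ω).eq_or_lt with hω | hω
  · simp [← hω]
  have hUV := pr_pos hp0 (E := fun ω' => U ω' = U ω ∧ V ω' = V ω) ⟨rfl, rfl⟩ hω
  have hU := pr_pos hp0 (E := fun ω' => U ω' = U ω) rfl hω
  have hV := pr_pos hp0 (E := fun ω' => V ω' = V ω) rfl hω
  rw [Real.log_div hUV.ne' (by positivity), Real.log_mul hU.ne' hV.ne']
  ring

end Entropy

section PrefixSeq

variable {Ω 𝒳 : Type*} (X : Ω → ℕ → 𝒳)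

theorem prefixSeq_succ (i : ℕ) (ω : Ω) :
    prefixSeq X (i + 1) ω = Fin.snoc (prefixSeq X i ω) (X ω i) := by
  funext k
  refine Fin.lastCases ?_ (fun k => ?_) k <;> simp [prefixSeq]

theorem prefixSeq_succ_eq_iff (i : ℕ) (ω' ω : Ω) :
    prefixSeq X (i + 1) ω' = prefixSeq X (i + 1) ω ↔
      X ω' i = X ω i ∧ prefixSeq X i ω' = prefixSeq X i ω := by
  rw [prefixSeq_succ, prefixSeq_succ, Fin.snoc_inj, and_comm]

end PrefixSeq

section InfoMat

variable {Ω 𝒳 𝒴 : Type*} [Fintype Ω] (p : Ω → ℝ) (X : Ω → ℕ → 𝒳) (Y : Ω → ℕ → 𝒴)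

def jointEntropy (i j : ℕ) : ℝ :=
  entropy p (fun ω => (prefixSeq X i ω, prefixSeq Y j ω))

-- Indices start at `0`: `infoMat p X Y i j` is the entry `(i+1, j+1)` of the paper's matrix.
def infoMat (i j : ℕ) : ℝ :=
  condMutualInfo p (fun ω => X ω i) (fun ω => Y ω j)
    (fun ω => (prefixSeq X i ω, prefixSeq Y j ω))

theorem jointEntropy_zero_left (j : ℕ) :
    jointEntropy p X Y 0 j = entropy p (prefixSeq Y j) :=
  entropy_congr fun ω' ω => by simp [Prod.ext_iff, eq_iff_true_of_subsingleton]

theorem jointEntropy_zero_right (i : ℕ) :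
    jointEntropy p X Y i 0 = entropy p (prefixSeq X i) :=
  entropy_congr fun ω' ω => by simp [Prod.ext_iff, eq_iff_true_of_subsingleton]

theorem jointEntropy_zero_zero (hp1 : ∑ ω, p ω = 1) : jointEntropy p X Y 0 0 = 0 := by
  have h : ∀ ω, pr p (fun ω' => (prefixSeq X 0 ω', prefixSeq Y 0 ω') =
      (prefixSeq X 0 ω, prefixSeq Y 0 ω)) = 1 := fun ω => by
    simpa [pr, Prod.ext_iff, eq_iff_true_of_subsingleton] using hp1
  rw [jointEntropy, entropy, sum_eq_zero fun ω _ => by rw [h ω, Real.log_one, mul_zero], neg_zero]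

theorem infoMat_eq_neg_mixedDiff (hp0 : ∀ ω, 0 ≤ p ω) (i j : ℕ) :
    infoMat p X Y i j = -mixedDiff (jointEntropy p X Y) i j := by
  have hXY : entropy p (fun ω => (X ω i, Y ω j, prefixSeq X i ω, prefixSeq Y j ω)) =
      jointEntropy p X Y (i + 1) (j + 1) := entropy_congr fun ω' ω => by
    simp only [Prod.mk.injEq, prefixSeq_succ_eq_iff]; tauto
  have hX : entropy p (fun ω => (X ω i, prefixSeq X i ω, prefixSeq Y j ω)) =
      jointEntropy p X Y (i + 1) j := entropy_congr fun ω' ω => by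
    simp only [Prod.mk.injEq, prefixSeq_succ_eq_iff, and_assoc]
  have hY : entropy p (fun ω => (Y ω j, prefixSeq X i ω, prefixSeq Y j ω)) =
      jointEntropy p X Y i (j + 1) := entropy_congr fun ω' ω => by
    simp only [Prod.mk.injEq, prefixSeq_succ_eq_iff]; tauto
  rw [infoMat, condMutualInfo_eq_entropy hp0, hXY, hX, hY, mixedDiff]
  simp only [jointEntropy]
  ring

theorem condMutualInfo_prefixSeq_eq_neg_sum_col (hp0 : ∀ ω, 0 ≤ p ω) (i : ℕ) :
    condMutualInfo p (prefixSeq X (i + 1)) (fun ω => Y ω i) (prefixSeq Y i) =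
      -∑ k ∈ range (i + 1), mixedDiff (jointEntropy p X Y) k i := by
  have hXY : entropy p (fun ω => (prefixSeq X (i + 1) ω, Y ω i, prefixSeq Y i ω)) =
      jointEntropy p X Y (i + 1) (i + 1) := entropy_congr fun ω' ω => by
    simp only [Prod.mk.injEq, prefixSeq_succ_eq_iff Y]
  have hY : entropy p (fun ω => (Y ω i, prefixSeq Y i ω)) = jointEntropy p X Y 0 (i + 1) := by
    rw [jointEntropy_zero_left]
    exact entropy_congr fun ω' ω => by simp only [Prod.mk.injEq, prefixSeq_succ_eq_iff]
  rw [condMutualInfo_eq_entropy hp0, hXY, hY, ← jointEntropy_zero_left p X,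
    sum_range_mixedDiff_left]
  simp only [jointEntropy]
  ring

theorem condMutualInfo_prefixSeq_eq_neg_sum_row (hp0 : ∀ ω, 0 ≤ p ω) (i : ℕ) :
    condMutualInfo p (prefixSeq Y i) (fun ω => X ω i) (prefixSeq X i) =
      -∑ j ∈ range i, mixedDiff (jointEntropy p X Y) i j := by
  have hXY : entropy p (fun ω => (prefixSeq Y i ω, X ω i, prefixSeq X i ω)) =
      jointEntropy p X Y (i + 1) i := entropy_congr fun ω' ω => by
    simp only [Prod.mk.injEq, prefixSeq_succ_eq_iff X]; tauto
  have hYX : entropy p (fun ω => (prefixSeq Y i ω, prefixSeq X i ω)) = jointEntropy p X Y i i :=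
    entropy_congr fun ω' ω => by simp only [Prod.mk.injEq]; tauto
  have hX : entropy p (fun ω => (X ω i, prefixSeq X i ω)) = jointEntropy p X Y (i + 1) 0 := by
    rw [jointEntropy_zero_right]
    exact entropy_congr fun ω' ω => by simp only [Prod.mk.injEq, prefixSeq_succ_eq_iff]
  rw [condMutualInfo_eq_entropy hp0, hXY, hYX, hX, ← jointEntropy_zero_right p X Y,
    sum_range_mixedDiff_right]
  ring

theorem mutualInfo_prefixSeq_eq_neg_sum (hp0 : ∀ ω, 0 ≤ p ω) (hp1 : ∑ ω, p ω = 1) (n : ℕ) :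
    mutualInfo p (prefixSeq X n) (prefixSeq Y n) =
      -∑ i ∈ range n, ∑ j ∈ range n, mixedDiff (jointEntropy p X Y) i j := by
  rw [mutualInfo_eq_entropy hp0, ← jointEntropy_zero_right p X Y, ← jointEntropy_zero_left p X Y,
    sum_range_sum_range_mixedDiff, jointEntropy_zero_zero p X Y hp1]
  simp only [jointEntropy]
  ring

theorem mutualInfo_prefixSeq_eq_sum_infoMat (hp0 : ∀ ω, 0 ≤ p ω) (hp1 : ∑ ω, p ω = 1) (n : ℕ) :
    mutualInfo p (prefixSeq X n) (prefixSeq Y n) =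
      ∑ i ∈ range n, ∑ j ∈ range n, infoMat p X Y i j := by
  simp only [mutualInfo_prefixSeq_eq_neg_sum p X Y hp0 hp1, infoMat_eq_neg_mixedDiff p X Y hp0,
    sum_neg_distrib]

theorem sum_infoMat_upper_eq_directedInfo (hp0 : ∀ ω, 0 ≤ p ω) (n : ℕ) :
    ∑ i ∈ range n, ∑ j ∈ range n, (if i ≤ j then infoMat p X Y i j else 0) =
      directedInfo p X Y n := by
  rw [sum_comm, directedInfo]
  refine sum_congr rfl fun j hj => ?_
  simp_rw [← Nat.lt_add_one_iff]
  rw [sum_range_ite_lt (mem_range.mp hj), condMutualInfo_prefixSeq_eq_neg_sum_col p X Y hp0]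
  simp only [infoMat_eq_neg_mixedDiff p X Y hp0, sum_neg_distrib]

theorem sum_infoMat_lower_eq_sum_condMutualInfo (hp0 : ∀ ω, 0 ≤ p ω) (n : ℕ) :
    ∑ i ∈ range n, ∑ j ∈ range n, (if j < i then infoMat p X Y i j else 0) =
      ∑ i ∈ range n, condMutualInfo p (prefixSeq Y i) (fun ω => X ω i) (prefixSeq X i) := by
  refine sum_congr rfl fun i hi => ?_
  rw [sum_range_ite_lt (mem_range.mp hi).le, condMutualInfo_prefixSeq_eq_neg_sum_row p X Y hp0]
  simp only [infoMat_eq_neg_mixedDiff p X Y hp0, sum_neg_distrib]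

end InfoMat

theorem infoMat_sums_general
    {Ω 𝒳 𝒴 : Type*} [Fintype Ω]
    (p : Ω → ℝ) (hp0 : ∀ ω, 0 ≤ p ω) (hp1 : ∑ ω, p ω = 1)
    (X : Ω → ℕ → 𝒳) (Y : Ω → ℕ → 𝒴) (n : ℕ) :
    (mutualInfo p (prefixSeq X n) (prefixSeq Y n) =
        ∑ i ∈ Finset.range n, ∑ j ∈ Finset.range n,
          condMutualInfo p (fun ω => X ω i) (fun ω => Y ω j)
            (fun ω => (prefixSeq X i ω, prefixSeq Y j ω))) ∧
      (∑ i ∈ Finset.range n, ∑ j ∈ Finset.range n,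
          (if i ≤ j then
            condMutualInfo p (fun ω => X ω i) (fun ω => Y ω j)
              (fun ω => (prefixSeq X i ω, prefixSeq Y j ω))
          else 0) = directedInfo p X Y n) ∧
      ∑ i ∈ Finset.range n, ∑ j ∈ Finset.range n,
          (if j < i then
            condMutualInfo p (fun ω => X ω i) (fun ω => Y ω j)
              (fun ω => (prefixSeq X i ω, prefixSeq Y j ω))
          else 0) =
        ∑ i ∈ Finset.range n,
          condMutualInfo p (prefixSeq Y i) (fun ω => X ω i) (prefixSeq X i) :=
  ⟨mutualInfo_prefixSeq_eq_sum_infoMat p X Y hp0 hp1 n,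
    sum_infoMat_upper_eq_directedInfo p X Y hp0 n,
    sum_infoMat_lower_eq_sum_condMutualInfo p X Y hp0 n⟩

/-- InfoMat total-sum identity: the mutual information equals the
sum of all entries `I(X_i; Y_j | X^{i-1}, Y^{j-1})` of the information matrix;
moreover the upper-triangular part (`j ≥ i`) sums to `I(X^n→Y^n)` and the strictly
lower-triangular part (`j < i`) sums to `I(DY^n→X^n)`. -/
theorem infoMat_sums
    {Ω 𝒳 𝒴 : Type*} [Fintype Ω] [Fintype 𝒳] [Fintype 𝒴]
    (p : Ω → ℝ) (hp0 : ∀ ω, 0 ≤ p ω) (hp1 : ∑ ω, p ω = 1)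
    (X : Ω → ℕ → 𝒳) (Y : Ω → ℕ → 𝒴) (n : ℕ) :
    (mutualInfo p (prefixSeq X n) (prefixSeq Y n) =
        ∑ i ∈ Finset.range n, ∑ j ∈ Finset.range n,
          condMutualInfo p (fun ω => X ω i) (fun ω => Y ω j)
            (fun ω => (prefixSeq X i ω, prefixSeq Y j ω))) ∧
      (∑ i ∈ Finset.range n, ∑ j ∈ Finset.range n,
          (if i ≤ j then
            condMutualInfo p (fun ω => X ω i) (fun ω => Y ω j)
              (fun ω => (prefixSeq X i ω, prefixSeq Y j ω))
          else 0) = directedInfo p X Y n) ∧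
      ∑ i ∈ Finset.range n, ∑ j ∈ Finset.range n,
          (if j < i then
            condMutualInfo p (fun ω => X ω i) (fun ω => Y ω j)
              (fun ω => (prefixSeq X i ω, prefixSeq Y j ω))
          else 0) =
        ∑ i ∈ Finset.range n,
          condMutualInfo p (prefixSeq Y i) (fun ω => X ω i) (prefixSeq X i) :=
  infoMat_sums_general p hp0 hp1 X Y n
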